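/- arXiv:1511.08672 — 9 statements merged into one kernel-verified Lean document; each statement's English description precedes it below -/
import Mathlib

section
/- Let V be a finite type and A an oriented graph on V. Then A is a push clique if and only if for every two distinct vertices u and v, either u and v are adjacent, or there exist vertices w and w' such that u and v agree on w and u and v disagree on w'. -/
/-- A directed graph `A` on `V` is an oriented graph: irreflexive and asymmetric. -/
def IsOriented {V : Type*} (A : V → V → Prop) : Prop :=
  (∀ v, ¬ A v v) ∧ ∀ u v, A u v → ¬ A v u

/-- `u` and `v` are adjacent in `A`. -/
def Adj {V : Type*} (A : V → V → Prop) (u v : V) : Prop :=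
  A u v ∨ A v u

/-- The push of `A` by the vertex set `S`: arcs with exactly one endpoint in `S`
are reversed. -/
def push {V : Type*} (S : Set V) (A : V → V → Prop) (u v : V) : Prop :=
  (Xor' (u ∈ S) (v ∈ S) ∧ A v u) ∨ (¬ Xor' (u ∈ S) (v ∈ S) ∧ A u v)

/-- `u` and `v` agree on `w`. -/
def AgreeOn {V : Type*} (A : V → V → Prop) (u v w : V) : Prop :=
  (A w u ∧ A w v) ∨ (A u w ∧ A v w)

/-- `u` and `v` disagree on `w`. -/
def DisagreeOn {V : Type*} (A : V → V → Prop) (u v w : V) : Prop :=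
  (A u w ∧ A w v) ∨ (A w u ∧ A v w)

/-- `u` and `v` are joined by a directed 2-path in `A`. -/
def TwoPath {V : Type*} (A : V → V → Prop) (u v : V) : Prop :=
  ∃ w, (A u w ∧ A w v) ∨ (A v w ∧ A w u)

/-- `A` is an oriented clique: any two distinct vertices are adjacent or joined
by a directed 2-path. -/
def IsOrientedClique {V : Type*} (A : V → V → Prop) : Prop :=
  ∀ u v, u ≠ v → Adj A u v ∨ TwoPath A u v

/-- `A` is a push clique: every push of `A` is an oriented clique. -/
def IsPushClique {V : Type*} (A : V → V → Prop) : Prop :=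
  ∀ S : Set V, IsOrientedClique (push S A)

/-- `A` is an orientation of the simple graph `G`. -/
def IsOrientationOf {V : Type*} (A : V → V → Prop) (G : SimpleGraph V) : Prop :=
  IsOriented A ∧ ∀ u v, Adj A u v ↔ G.Adj u v

/-- `G` is an underlying push clique. -/
def IsUnderlyingPushClique {V : Type*} (G : SimpleGraph V) : Prop :=
  ∃ A : V → V → Prop, IsOrientationOf A G ∧ IsPushClique A

/-- `G` is an underlying oriented clique. -/
def IsUnderlyingOrientedClique {V : Type*} (G : SimpleGraph V) : Prop :=
  ∃ A : V → V → Prop, IsOrientationOf A G ∧ IsOrientedClique A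

lemma adj_push {V : Type*} (S : Set V) (A : V → V → Prop) (u v : V) :
    Adj (push S A) u v ↔ Adj A u v := by
  unfold Adj push Xor'
  by_cases hu : u ∈ S <;> by_cases hv : v ∈ S <;> simp [hu, hv] <;> tauto

lemma twopath_push {V : Type*} (S : Set V) (A : V → V → Prop) (u v w : V) :
    ((push S A u w ∧ push S A w v) ∨ (push S A v w ∧ push S A w u)) ↔
      (((u ∈ S ↔ v ∈ S) ∧ DisagreeOn A u v w) ∨
        (¬(u ∈ S ↔ v ∈ S) ∧ AgreeOn A u v w)) := by
  unfold push Xor' DisagreeOn AgreeOn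
  by_cases hu : u ∈ S <;> by_cases hv : v ∈ S <;> by_cases hw : w ∈ S <;>
    simp [hu, hv, hw] <;> tauto

theorem stmt_0 {V : Type*} [Fintype V] (A : V → V → Prop) (hA : IsOriented A) :
    IsPushClique A ↔
      ∀ u v : V, u ≠ v →
        (Adj A u v ∨
          ((∃ w, AgreeOn A u v w) ∧ (∃ w', DisagreeOn A u v w'))) := by
  constructor
  · intro h u v huv
    by_cases hadj : Adj A u v
    · exact Or.inl hadj
    refine Or.inr ⟨?_, ?_⟩
    · rcases h {u} u v huv with h' | ⟨w, hw⟩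
      · exact absurd ((adj_push {u} A u v).mp h') hadj
      · refine ⟨w, ?_⟩
        have := (twopath_push {u} A u v w).mp hw
        rcases this with ⟨hiff, _⟩ | ⟨_, hag⟩
        · exact absurd (hiff.mp rfl) huv.symm
        · exact hag
    · rcases h ∅ u v huv with h' | ⟨w, hw⟩
      · exact absurd ((adj_push ∅ A u v).mp h') hadj
      · refine ⟨w, ?_⟩
        have := (twopath_push ∅ A u v w).mp hw
        rcases this with ⟨_, hd⟩ | ⟨hn, _⟩
        · exact hd
        · exact absurd (by simp) hn
  · intro h S u v huv
    rcases h u v huv with hadj | ⟨⟨w, hw⟩, ⟨w', hw'⟩⟩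
    · exact Or.inl ((adj_push S A u v).mpr hadj)
    · right
      by_cases hiff : (u ∈ S ↔ v ∈ S)
      · exact ⟨w', (twopath_push S A u v w').mpr (Or.inl ⟨hiff, hw'⟩)⟩
      · exact ⟨w, (twopath_push S A u v w).mpr (Or.inr ⟨hiff, hw⟩)⟩
end

section
/- Let V be a type, A an oriented graph on V, and u ≠ v two non-adjacent vertices. Then u and v are joined by a directed 2-path in push S A for every set S ⊆ V if and only if there exists a vertex w on which u and v agree and a vertex w' on which u and v disagree. -/
/-!
Pushing by `S` reverses exactly the arcs with one end in `S`. For any vertex `w`, exactly one of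
the arcs between `u, w` and between `w, v` is reversed precisely when `S` separates `u` and `v`.
So a vertex on which `u` and `v` disagree stays on a directed 2-path (possibly reversed) when `u`
and `v` are on the same side of `S`, and one on which they agree becomes one when `S` separates
them. Conversely, the pushes by `∅` and by `{u}` produce the two kinds of vertices.
-/

section Push

variable {V : Type*} {A : V → V → Prop} {S : Set V} {x y u v w : V}

theorem push_iff_of_mem_iff (h : x ∈ S ↔ y ∈ S) : push S A x y ↔ A x y := by
  have hxor : ¬ Xor (x ∈ S) (y ∈ S) := (xor_iff_not_iff _ _).not.2 (not_not.2 h)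
  unfold push
  tauto

theorem push_iff_of_not_mem_iff (h : ¬(x ∈ S ↔ y ∈ S)) : push S A x y ↔ A y x := by
  have hxor : Xor (x ∈ S) (y ∈ S) := (xor_iff_not_iff _ _).2 h
  unfold push
  tauto

theorem push_empty (A : V → V → Prop) : push ∅ A = A := by
  ext x y
  exact push_iff_of_mem_iff Iff.rfl

theorem twoPath_iff_exists_disagreeOn : TwoPath A u v ↔ ∃ w, DisagreeOn A u v w := by
  simp only [TwoPath, DisagreeOn, and_comm (a := A v _)]

theorem twoPath_push_of_disagreeOn (huv : u ∈ S ↔ v ∈ S) (hw : DisagreeOn A u v w) :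
    TwoPath (push S A) u v := by
  refine ⟨w, ?_⟩
  by_cases huw : u ∈ S ↔ w ∈ S
  · have hwv : w ∈ S ↔ v ∈ S := huw.symm.trans huv
    rw [push_iff_of_mem_iff huw, push_iff_of_mem_iff hwv, push_iff_of_mem_iff huw.symm,
      push_iff_of_mem_iff hwv.symm]
    unfold DisagreeOn at hw
    tauto
  · have hwv : ¬(w ∈ S ↔ v ∈ S) := fun hwv => huw (huv.trans hwv.symm)
    rw [push_iff_of_not_mem_iff huw, push_iff_of_not_mem_iff hwv,
      push_iff_of_not_mem_iff (mt Iff.symm huw), push_iff_of_not_mem_iff (mt Iff.symm hwv)]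
    unfold DisagreeOn at hw
    tauto

theorem twoPath_push_of_agreeOn (huv : ¬(u ∈ S ↔ v ∈ S)) (hw : AgreeOn A u v w) :
    TwoPath (push S A) u v := by
  refine ⟨w, ?_⟩
  by_cases huw : u ∈ S ↔ w ∈ S
  · have hwv : ¬(w ∈ S ↔ v ∈ S) := fun hwv => huv (huw.trans hwv)
    rw [push_iff_of_mem_iff huw, push_iff_of_not_mem_iff hwv, push_iff_of_mem_iff huw.symm,
      push_iff_of_not_mem_iff (mt Iff.symm hwv)]
    unfold AgreeOn at hw
    tauto
  · have hwv : w ∈ S ↔ v ∈ S := by tauto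
    rw [push_iff_of_not_mem_iff huw, push_iff_of_mem_iff hwv,
      push_iff_of_not_mem_iff (mt Iff.symm huw), push_iff_of_mem_iff hwv.symm]
    unfold AgreeOn at hw
    tauto

theorem exists_agreeOn_of_twoPath_push_singleton (hirr : ∀ x, ¬ A x x) (huv : u ≠ v)
    (h : TwoPath (push {u} A) u v) : ∃ w, AgreeOn A u v w := by
  obtain ⟨w, hw⟩ := h
  have hloop : ∀ x, ¬ push {u} A x x := fun x => (push_iff_of_mem_iff Iff.rfl).not.2 (hirr x)
  have hwu : w ≠ u := by rintro rfl; exact hloop w (hw.elim (·.1) (·.2))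
  have hwv : w ≠ v := by rintro rfl; exact hloop w (hw.elim (·.2) (·.1))
  have hcut : ¬(u ∈ ({u} : Set V) ↔ w ∈ ({u} : Set V)) := by simp [hwu]
  have huncut : w ∈ ({u} : Set V) ↔ v ∈ ({u} : Set V) := by simp [hwu, huv.symm]
  rw [push_iff_of_not_mem_iff hcut, push_iff_of_mem_iff huncut, push_iff_of_mem_iff huncut.symm,
    push_iff_of_not_mem_iff (mt Iff.symm hcut)] at hw
  exact ⟨w, by unfold AgreeOn; tauto⟩

end Push

theorem stmt_1_general {V : Type*} (A : V → V → Prop) (hA : IsOriented A)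
    (u v : V) (huv : u ≠ v) :
    (∀ S : Set V, TwoPath (push S A) u v) ↔
      ((∃ w, AgreeOn A u v w) ∧ (∃ w', DisagreeOn A u v w')) := by
  constructor
  · intro h
    refine ⟨exists_agreeOn_of_twoPath_push_singleton hA.1 huv (h {u}), ?_⟩
    exact twoPath_iff_exists_disagreeOn.1 (push_empty A ▸ h ∅)
  · rintro ⟨⟨w, hw⟩, w', hw'⟩ S
    by_cases hS : u ∈ S ↔ v ∈ S
    · exact twoPath_push_of_disagreeOn hS hw'
    · exact twoPath_push_of_agreeOn hS hw

theorem stmt_1 {V : Type*} (A : V → V → Prop) (hA : IsOriented A)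
    (u v : V) (huv : u ≠ v) (hnadj : ¬ Adj A u v) :
    (∀ S : Set V, TwoPath (push S A) u v) ↔
      ((∃ w, AgreeOn A u v w) ∧ (∃ w', DisagreeOn A u v w')) :=
  stmt_1_general A hA u v huv
end

section
/- Let G be a simple graph on a finite vertex type V, and let G⋆ be the simple graph on Option V obtained from G by adding one new vertex (the element none) adjacent to every vertex of G (so (some u) and (some v) are adjacent in G⋆ iff u and v are adjacent in G, and none is adjacent in G⋆ to some v for every v). Then G⋆ is an underlying push clique if and only if G is an underlying oriented clique. -/
/-!
Adding a vertex that dominates `G` and orienting it as a source turns an oriented clique on `G`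
into a push clique: after a push we may assume (replacing `S` by its complement) that the new
vertex is not pushed, and then two vertices on opposite sides of `S` are joined by a 2-path
through it, while 2-paths between vertices on the same side survive the push. Conversely, pushing
a push clique on `G⋆` by the in-neighbourhood of the new vertex makes that vertex a source; a
source lies on no directed 2-path, so deleting it leaves an oriented clique orienting `G`.
-/

section Push

variable {V : Type*} {S : Set V} {A : V → V → Prop} {u v : V}

lemma push_iff :
    push S A u v ↔ (¬(u ∈ S ↔ v ∈ S) ∧ A v u) ∨ ((u ∈ S ↔ v ∈ S) ∧ A u v) := by
  change (Xor _ _ ∧ _) ∨ (¬Xor _ _ ∧ _) ↔ _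
  rw [xor_iff_not_iff, not_not]

lemma push_apply_of_iff (h : u ∈ S ↔ v ∈ S) : push S A u v ↔ A u v := by
  simp [push_iff, h]

lemma push_apply_of_not_iff (h : ¬(u ∈ S ↔ v ∈ S)) : push S A u v ↔ A v u := by
  simp [push_iff, h]

lemma adj_push_iff : Adj (push S A) u v ↔ Adj A u v := by
  by_cases h : u ∈ S ↔ v ∈ S
  · simp only [Adj, push_apply_of_iff h, push_apply_of_iff h.symm]
  · simp only [Adj, push_apply_of_not_iff h, push_apply_of_not_iff (mt Iff.symm h), or_comm]

lemma push_compl (S : Set V) (A : V → V → Prop) : push Sᶜ A = push S A := by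
  funext u v
  simp only [push_iff, Set.mem_compl_iff, not_iff_not]

lemma IsOriented.push (hA : IsOriented A) (S : Set V) : IsOriented (push S A) := by
  refine ⟨fun v => by simpa [push_apply_of_iff] using hA.1 v, fun u v huv hvu => ?_⟩
  by_cases h : u ∈ S ↔ v ∈ S
  · exact hA.2 u v ((push_apply_of_iff h).1 huv) ((push_apply_of_iff h.symm).1 hvu)
  · exact hA.2 v u ((push_apply_of_not_iff h).1 huv)
      ((push_apply_of_not_iff (mt Iff.symm h)).1 hvu)

lemma IsOrientationOf.push {G : SimpleGraph V} (hA : IsOrientationOf A G) (S : Set V) :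
    IsOrientationOf (push S A) G :=
  ⟨hA.1.push S, fun u v => adj_push_iff.trans (hA.2 u v)⟩

/-- If the middle vertex is on the other side of `S`, both arcs are reversed and the 2-path
runs backwards. -/
lemma TwoPath.push_of_iff (hA : TwoPath A u v) (h : u ∈ S ↔ v ∈ S) :
    TwoPath (push S A) u v := by
  obtain ⟨w, hw⟩ := hA
  refine ⟨w, ?_⟩
  simp only [push_iff]
  by_cases hw' : w ∈ S <;> tauto

lemma push_setOf_apply_source (hA : IsOriented A) (hv : Adj A v u) :
    push {x | A x v} A v u := by
  have hvS : v ∉ {x | A x v} := hA.1 v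
  rcases hv with h | h
  · exact (push_apply_of_iff (iff_of_false hvS (hA.2 v u h))).2 h
  · exact (push_apply_of_not_iff (by simpa [hvS] using h)).2 h

end Push

section Restrict

variable {V W : Type*}

lemma IsOrientationOf.comap {A : V → V → Prop} {G' : SimpleGraph V} {G : SimpleGraph W}
    (hA : IsOrientationOf A G') (f : W → V) (hG : ∀ u v, G'.Adj (f u) (f v) ↔ G.Adj u v) :
    IsOrientationOf (fun u v => A (f u) (f v)) G :=
  ⟨⟨fun v => hA.1.1 (f v), fun u v => hA.1.2 (f u) (f v)⟩,
    fun u v => (hA.2 _ _).trans (hG u v)⟩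

lemma IsOrientedClique.restrict_some_of_source {A : Option V → Option V → Prop}
    (hA : IsOrientedClique A) (hor : IsOriented A) (hsrc : ∀ v, A none (some v)) :
    IsOrientedClique (fun u v => A (some u) (some v)) := by
  intro u v huv
  rcases hA (some u) (some v) (Option.some_injective V |>.ne huv) with h | ⟨w | w, hw⟩
  · exact Or.inl h
  · rcases hw with ⟨hu, -⟩ | ⟨hv, -⟩
    · exact (hor.2 _ _ (hsrc u) hu).elim
    · exact (hor.2 _ _ (hsrc v) hv).elim
  · exact Or.inr ⟨w, hw⟩

end Restrict

section AddSource

variable {V : Type*} {A : V → V → Prop}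

def addSource (A : V → V → Prop) : Option V → Option V → Prop
  | none, some _ => True
  | some u, some v => A u v
  | _, _ => False

lemma IsOrientationOf.addSource {G : SimpleGraph V} {Gstar : SimpleGraph (Option V)}
    (hA : IsOrientationOf A G) (h1 : ∀ u v : V, Gstar.Adj (some u) (some v) ↔ G.Adj u v)
    (h2 : ∀ v : V, Gstar.Adj none (some v)) :
    IsOrientationOf (_root_.addSource A) Gstar := by
  refine ⟨⟨?_, ?_⟩, ?_⟩
  · rintro (_ | v) h
    exacts [h, hA.1.1 v h]
  · rintro (_ | u) (_ | v) huv hvu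
    exacts [huv, hvu, huv, hA.1.2 u v huv hvu]
  · rintro (_ | u) (_ | v)
    · simp [Adj, _root_.addSource]
    · simp [Adj, _root_.addSource, h2]
    · simp [Adj, _root_.addSource, (h2 u).symm]
    · exact (hA.2 u v).trans (h1 u v).symm

lemma IsOrientedClique.push_addSource_of_none_notMem (hA : IsOrientedClique A) {S : Set (Option V)}
    (hS : none ∉ S) : IsOrientedClique (push S (addSource A)) := by
  rintro (_ | u) (_ | v) huv
  · exact (huv rfl).elim
  · exact Or.inl (adj_push_iff.2 (Or.inl trivial))
  · exact Or.inl (adj_push_iff.2 (Or.inr trivial))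
  rcases hA u v (fun h => huv (congrArg some h)) with h | ⟨w, hw⟩
  · exact Or.inl (adj_push_iff.2 h)
  right
  by_cases h : some u ∈ S ↔ some v ∈ S
  · exact TwoPath.push_of_iff ⟨some w, hw⟩ h
  refine ⟨none, ?_⟩
  by_cases hu : some u ∈ S
  · refine Or.inl ⟨(push_apply_of_not_iff (by tauto)).2 trivial, ?_⟩
    exact (push_apply_of_iff (iff_of_false hS (by tauto))).2 trivial
  · refine Or.inr ⟨(push_apply_of_not_iff (by tauto)).2 trivial, ?_⟩
    exact (push_apply_of_iff (iff_of_false hS hu)).2 trivial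

lemma IsOrientedClique.isPushClique_addSource (hA : IsOrientedClique A) :
    IsPushClique (addSource A) := by
  intro S
  by_cases hS : none ∈ S
  · rw [← push_compl]
    exact hA.push_addSource_of_none_notMem (by simpa using hS)
  · exact hA.push_addSource_of_none_notMem hS

end AddSource

theorem stmt_4_general {V : Type*} (G : SimpleGraph V)
    (Gstar : SimpleGraph (Option V))
    (h1 : ∀ u v : V, Gstar.Adj (some u) (some v) ↔ G.Adj u v)
    (h2 : ∀ v : V, Gstar.Adj none (some v)) :
    IsUnderlyingPushClique Gstar ↔ IsUnderlyingOrientedClique G := by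
  constructor
  · rintro ⟨A, hAG, hA⟩
    set B := push {x | A x none} A
    have hBG : IsOrientationOf B Gstar := hAG.push _
    have hsrc : ∀ v, B none (some v) :=
      fun v => push_setOf_apply_source hAG.1 ((hAG.2 _ _).2 (h2 v))
    exact ⟨_, hBG.comap some h1, (hA _).restrict_some_of_source hBG.1 hsrc⟩
  · rintro ⟨A, hAG, hA⟩
    exact ⟨addSource A, hAG.addSource h1 h2, hA.isPushClique_addSource⟩

theorem stmt_4 {V : Type*} [Fintype V] (G : SimpleGraph V)
    (Gstar : SimpleGraph (Option V))
    (h1 : ∀ u v : V, Gstar.Adj (some u) (some v) ↔ G.Adj u v)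
    (h2 : ∀ v : V, Gstar.Adj none (some v)) :
    IsUnderlyingPushClique Gstar ↔ IsUnderlyingOrientedClique G :=
  stmt_4_general G Gstar h1 h2
end

section
/- Let G be a simple graph on a finite vertex type V and let v ∈ V be a vertex adjacent in G to every other vertex. If G is an underlying push clique, then the induced subgraph of G on V \ {v} is an underlying oriented clique. -/
theorem stmt_5 {V : Type*} [Fintype V] (G : SimpleGraph V) (v : V)
    (hv : ∀ u : V, u ≠ v → G.Adj v u)
    (h : IsUnderlyingPushClique G) :
    IsUnderlyingOrientedClique (G.induce {u : V | u ≠ v}) := by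
  obtain ⟨A, ⟨⟨hirr, hasym⟩, hadj⟩, hpush⟩ := h
  set S : Set V := {u : V | A u v} with hS
  set B : V → V → Prop := push S A with hB
  have hBirr : ∀ u, ¬ B u u := by
    intro u hu
    rcases hu with ⟨hx, hA⟩ | ⟨hx, hA⟩
    · exact hirr u hA
    · exact hirr u hA
  have hBasym : ∀ u w, B u w → ¬ B w u := by
    intro u w h1 h2
    rcases h1 with ⟨hx1, hA1⟩ | ⟨hx1, hA1⟩ <;>
      rcases h2 with ⟨hx2, hA2⟩ | ⟨hx2, hA2⟩
    · exact hasym _ _ hA1 hA2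
    · exact hx2 hx1.symm
    · exact hx1 hx2.symm
    · exact hasym _ _ hA1 hA2
  have hBAdj : ∀ u w, Adj B u w ↔ Adj A u w := by
    intro u w
    constructor
    · rintro ((⟨hx, hA1⟩ | ⟨hx, hA1⟩) | (⟨hx, hA1⟩ | ⟨hx, hA1⟩))
      · exact Or.inr hA1
      · exact Or.inl hA1
      · exact Or.inl hA1
      · exact Or.inr hA1
    · intro hA1
      by_cases hx : Xor' (u ∈ S) (w ∈ S)
      · rcases hA1 with h1 | h1
        · exact Or.inr (Or.inl ⟨hx.symm, h1⟩)
        · exact Or.inl (Or.inl ⟨hx, h1⟩)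
      · rcases hA1 with h1 | h1
        · exact Or.inl (Or.inr ⟨hx, h1⟩)
        · exact Or.inr (Or.inr ⟨fun hc => hx hc.symm, h1⟩)
  have hvS : v ∉ S := hirr v
  have hnoBv : ∀ u, ¬ B u v := by
    intro u hu
    rcases hu with ⟨hx, hA1⟩ | ⟨hx, hA1⟩
    · -- A v u holds; xor means u ∈ S i.e. A u v, contradicting asymmetry
      rcases hx with ⟨huS, _⟩ | ⟨hvS', _⟩
      · exact hasym u v huS hA1
      · exact hvS hvS'
    · -- A u v holds, so u ∈ S, but xor is false and v ∉ S
      exact hx (Or.inl ⟨hA1, hvS⟩)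
  have hBclique := hpush S
  refine ⟨fun a b => B a.val b.val, ⟨⟨fun a => hBirr a.val, fun a b => hBasym a.val b.val⟩, ?_⟩, ?_⟩
  · intro a b
    rw [show Adj (fun a b : {u : V | u ≠ v} => B a.val b.val) a b ↔ Adj B a.val b.val from Iff.rfl,
      hBAdj, hadj]
    exact Iff.rfl
  · intro a b hab
    have hne : a.val ≠ b.val := fun hc => hab (Subtype.ext hc)
    rcases hBclique a.val b.val hne with hadj' | ⟨w, hw⟩
    · exact Or.inl hadj'
    · have hwv : w ≠ v := by
        rintro rfl
        rcases hw with ⟨h1, _⟩ | ⟨h1, _⟩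
        · exact hnoBv a.val h1
        · exact hnoBv b.val h1
      exact Or.inr ⟨⟨w, hwv⟩, hw⟩
end

section
/- Any simple graph on a finite vertex type that is an underlying push clique and is not a complete graph contains a cycle of length 4 as a subgraph: there exist four distinct vertices a, b, c, d such that ab, bc, cd and da are all edges. -/
theorem stmt_8 {V : Type*} [Fintype V] (G : SimpleGraph V)
    (h : IsUnderlyingPushClique G) (hG : G ≠ ⊤) :
    ∃ a b c d : V, a ≠ b ∧ a ≠ c ∧ a ≠ d ∧ b ≠ c ∧ b ≠ d ∧ c ≠ d ∧
      G.Adj a b ∧ G.Adj b c ∧ G.Adj c d ∧ G.Adj d a := by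

  obtain ⟨A, ⟨⟨hirr, hasym⟩, hA⟩, hpush⟩ := h
  obtain ⟨u, v, huv, hnadj⟩ : ∃ u v : V, u ≠ v ∧ ¬ G.Adj u v := by
    by_contra hc
    push_neg at hc
    apply hG
    ext a b
    simp only [SimpleGraph.top_adj]
    exact ⟨fun h' => h'.ne, fun h' => hc a b h'⟩
  have hAuv : ¬ A u v := fun h' => hnadj ((hA u v).mp (Or.inl h'))
  have hAvu : ¬ A v u := fun h' => hnadj ((hA u v).mp (Or.inr h'))
  have key : ∀ S : Set V, ∃ w, Adj A u w ∧ Adj A w v ∧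
      ((push S A u w ∧ push S A w v) ∨ (push S A v w ∧ push S A w u)) := by
    intro S
    rcases hpush S u v huv with hadj | ⟨w, hw⟩
    · exfalso
      rcases hadj with h' | h' <;> rcases h' with ⟨_, h''⟩ | ⟨_, h''⟩ <;> tauto
    · refine ⟨w, ?_, ?_, hw⟩ <;>
      · rcases hw with ⟨h1, h2⟩ | ⟨h1, h2⟩ <;>
          rcases h1 with ⟨_, h1⟩ | ⟨_, h1⟩ <;> rcases h2 with ⟨_, h2⟩ | ⟨_, h2⟩ <;>
          unfold Adj <;> tauto
  obtain ⟨w, hw1, hw2, hwp⟩ := key ∅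
  obtain ⟨w', hw1', hw2', hwp'⟩ := key {u}
  have hw : (A u w ∧ A w v) ∨ (A v w ∧ A w u) := by
    simpa [push, Xor'] using hwp
  have hwu : w ≠ u := by rintro rfl; rcases hw1 with h' | h' <;> exact hirr _ h'
  have hwv : w ≠ v := by rintro rfl; rcases hw2 with h' | h' <;> exact hirr _ h'
  have hw'u : w' ≠ u := by rintro rfl; rcases hw1' with h' | h' <;> exact hirr _ h'
  have hw'v : w' ≠ v := by rintro rfl; rcases hw2' with h' | h' <;> exact hirr _ h'
  have hww' : w ≠ w' := by
    rintro rfl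
    have hwp'' : (A w u ∧ A w v) ∨ (A v w ∧ A u w) := by
      simpa [push, Xor', Set.mem_singleton_iff, hwu, Ne.symm huv] using hwp'
    rcases hwp'' with ⟨h1, h2⟩ | ⟨h1, h2⟩ <;> rcases hw with ⟨h3, h4⟩ | ⟨h3, h4⟩ <;>
      first
        | exact hasym _ _ h3 h1 | exact hasym _ _ h1 h3
        | exact hasym _ _ h2 h4 | exact hasym _ _ h4 h2
        | exact hasym _ _ h3 h2 | exact hasym _ _ h2 h3
        | exact hasym _ _ h1 h4
  refine ⟨u, w, v, w', Ne.symm hwu, huv, Ne.symm hw'u, hwv, hww', Ne.symm hw'v,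
    (hA u w).mp hw1, (hA w v).mp hw2, (hA v w').mp hw2'.symm, (hA w' u).mp hw1'.symm⟩
end

section
/- The simple graph on vertices a, b, c, d, e consisting of the 5-cycle a-b-c-d-e-a together with the two incident chords ac and ce is not an underlying push clique. -/
/-- Auxiliary: arcs of an orientation of the graph, coded by 7 edge bits. -/
def arcAux (b : Fin 7 → Bool) : Fin 5 → Fin 5 → Bool :=
  ![![false, b 0, b 5, false, !b 4],
    ![!b 0, false, b 1, false, false],
    ![!b 5, !b 1, false, b 2, b 6],
    ![false, false, !b 2, false, b 3],
    ![b 4, false, !b 6, !b 3, false]]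

/-- Auxiliary: pushed arcs. -/
def parcAux (s : Fin 5 → Bool) (b : Fin 7 → Bool) (u v : Fin 5) : Bool :=
  if s u != s v then arcAux b v u else arcAux b u v

/-- Auxiliary: boolean two-path check. -/
def twoPathAux (c : Fin 5 → Fin 5 → Bool) (u v : Fin 5) : Bool :=
  (List.finRange 5).any fun w => (c u w && c w v) || (c v w && c w u)

lemma keyAux : ∀ b : Fin 7 → Bool, ∃ s : Fin 5 → Bool,
    twoPathAux (parcAux s b) 0 3 = false ∨ twoPathAux (parcAux s b) 1 3 = false ∨
    twoPathAux (parcAux s b) 1 4 = false := by set_option maxRecDepth 10000 in decide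

lemma noIffAux {q : Prop} (h : ¬ q) : q ↔ (false = true) := by simp [h]

lemma fwdIffAux {p : Prop} [Decidable p] : p ↔ (decide p = true) := decide_eq_true_iff.symm

lemma backIffAux {p q : Prop} [Decidable p] (h1 : q → ¬ p) (h2 : p ∨ q) :
    q ↔ ((!decide p) = true) := by
  constructor
  · intro hq; simp [h1 hq]
  · intro h; simp only [Bool.not_eq_true', decide_eq_false_iff_not] at h
    exact h2.resolve_left h

/-- The 5-cycle `0-1-2-3-4-0` together with the two incident chords `02`
and `24`. -/
theorem stmt_13 :
    ¬ IsUnderlyingPushClique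
      (SimpleGraph.fromRel
        (fun u v : Fin 5 =>
          (u, v) = (0, 1) ∨ (u, v) = (1, 2) ∨ (u, v) = (2, 3) ∨
          (u, v) = (3, 4) ∨ (u, v) = (4, 0) ∨ (u, v) = (0, 2) ∨
          (u, v) = (2, 4))) := by
  classical
  rintro ⟨A, ⟨⟨hirr, hasym⟩, hadj⟩, hpush⟩
  set G := (SimpleGraph.fromRel
        (fun u v : Fin 5 =>
          (u, v) = (0, 1) ∨ (u, v) = (1, 2) ∨ (u, v) = (2, 3) ∨
          (u, v) = (3, 4) ∨ (u, v) = (4, 0) ∨ (u, v) = (0, 2) ∨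
          (u, v) = (2, 4))) with hGdef
  have hGadj : ∀ u v : Fin 5,
      (u ≠ v ∧ ((u, v) = (0, 1) ∨ (u, v) = (1, 2) ∨ (u, v) = (2, 3) ∨
          (u, v) = (3, 4) ∨ (u, v) = (4, 0) ∨ (u, v) = (0, 2) ∨
          (u, v) = (2, 4) ∨ (v, u) = (0, 1) ∨ (v, u) = (1, 2) ∨ (v, u) = (2, 3) ∨
          (v, u) = (3, 4) ∨ (v, u) = (4, 0) ∨ (v, u) = (0, 2) ∨
          (v, u) = (2, 4))) → Adj A u v := by
    intro u v h
    refine (hadj u v).2 ?_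
    rw [hGdef, SimpleGraph.fromRel_adj]
    tauto
  have hnot : ∀ u v : Fin 5,
      ¬ (u ≠ v ∧ ((u, v) = (0, 1) ∨ (u, v) = (1, 2) ∨ (u, v) = (2, 3) ∨
          (u, v) = (3, 4) ∨ (u, v) = (4, 0) ∨ (u, v) = (0, 2) ∨
          (u, v) = (2, 4) ∨ (v, u) = (0, 1) ∨ (v, u) = (1, 2) ∨ (v, u) = (2, 3) ∨
          (v, u) = (3, 4) ∨ (v, u) = (4, 0) ∨ (v, u) = (0, 2) ∨
          (v, u) = (2, 4))) → ¬ A u v := by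
    intro u v h ha
    apply h
    have := (hadj u v).1 (Or.inl ha)
    rw [hGdef, SimpleGraph.fromRel_adj] at this
    tauto
  set b : Fin 7 → Bool :=
    ![decide (A 0 1), decide (A 1 2), decide (A 2 3), decide (A 3 4),
      decide (A 4 0), decide (A 0 2), decide (A 2 4)] with hbdef
  have harc : ∀ u v : Fin 5, A u v ↔ arcAux b u v = true := by
    intro u v
    fin_cases u <;> fin_cases v
    · exact noIffAux (hirr 0)
    · exact fwdIffAux
    · exact fwdIffAux
    · exact noIffAux (hnot 0 3 (by decide))
    · exact backIffAux (fun h => hasym 0 4 h) (hGadj 4 0 (by decide))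
    · exact backIffAux (fun h => hasym 1 0 h) (hGadj 0 1 (by decide))
    · exact noIffAux (hirr 1)
    · exact fwdIffAux
    · exact noIffAux (hnot 1 3 (by decide))
    · exact noIffAux (hnot 1 4 (by decide))
    · exact backIffAux (fun h => hasym 2 0 h) (hGadj 0 2 (by decide))
    · exact backIffAux (fun h => hasym 2 1 h) (hGadj 1 2 (by decide))
    · exact noIffAux (hirr 2)
    · exact fwdIffAux
    · exact fwdIffAux
    · exact noIffAux (hnot 3 0 (by decide))
    · exact noIffAux (hnot 3 1 (by decide))
    · exact backIffAux (fun h => hasym 3 2 h) (hGadj 2 3 (by decide))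
    · exact noIffAux (hirr 3)
    · exact fwdIffAux
    · exact fwdIffAux
    · exact noIffAux (hnot 4 1 (by decide))
    · exact backIffAux (fun h => hasym 4 2 h) (hGadj 2 4 (by decide))
    · exact backIffAux (fun h => hasym 4 3 h) (hGadj 3 4 (by decide))
    · exact noIffAux (hirr 4)
  obtain ⟨s, hs⟩ := keyAux b
  set S : Set (Fin 5) := {v | s v = true} with hSdef
  have hxor : ∀ u v : Fin 5, Xor' (u ∈ S) (v ∈ S) ↔ (s u != s v) = true := by
    intro u v
    cases hu : s u <;> cases hv : s v <;>
      simp [Xor', hSdef, Set.mem_setOf_eq, hu, hv]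
  have hp : ∀ u v : Fin 5, push S A u v ↔ parcAux s b u v = true := by
    intro u v
    unfold push parcAux
    by_cases hx : (s u != s v) = true
    · rw [if_pos hx]
      simp [(hxor u v).2 hx, harc]
    · rw [if_neg hx]
      have hnx : ¬ Xor' (u ∈ S) (v ∈ S) := fun h => hx ((hxor u v).1 h)
      simp [hnx, harc]
  have htp : ∀ u v : Fin 5, TwoPath (push S A) u v → twoPathAux (parcAux s b) u v = true := by
    rintro u v ⟨w, hw⟩
    refine List.any_eq_true.2 ⟨w, List.mem_finRange w, ?_⟩
    rcases hw with ⟨h1, h2⟩ | ⟨h1, h2⟩ <;> simp [(hp _ _).1 h1, (hp _ _).1 h2]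
  have hnadj : ∀ u v : Fin 5, ¬ A u v → ¬ A v u → ¬ Adj (push S A) u v := by
    intro u v h1 h2 h
    rcases h with h | h <;> rcases h with ⟨_, h⟩ | ⟨_, h⟩ <;> [exact h2 h; exact h1 h; exact h1 h; exact h2 h]
  rcases hs with hf | hf | hf
  · exact absurd (htp 0 3 ((hpush S 0 3 (by decide)).resolve_left
      (hnadj 0 3 (hnot 0 3 (by decide)) (hnot 3 0 (by decide))))) (by simp [hf])
  · exact absurd (htp 1 3 ((hpush S 1 3 (by decide)).resolve_left
      (hnadj 1 3 (hnot 1 3 (by decide)) (hnot 3 1 (by decide))))) (by simp [hf])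
  · exact absurd (htp 1 4 ((hpush S 1 4 (by decide)).resolve_left
      (hnadj 1 4 (hnot 1 4 (by decide)) (hnot 4 1 (by decide))))) (by simp [hf])
end

section
/- Every simple graph on a vertex type with exactly 5 elements that is an underlying push clique contains, as a spanning subgraph, a 5-cycle together with two non-incident chords: its five vertices can be listed as a, b, c, d, e so that ab, bc, cd, de, ea, ac and bd are all edges. -/
namespace PushAux

variable (a0 a1 a2 a3 a4 a5 a6 a7 a8 a9 : Nat)

def hypB : Bool :=
  (a0 != 0 || ((((((a1 == 2) && (a4 == 2)) || ((a1 == 1) && (a4 == 1))) || (((a2 == 2) && (a5 == 2)) || ((a2 == 1) && (a5 == 1))) || (((a3 == 2) && (a6 == 2)) || ((a3 == 1) && (a6 == 1))))) && (((((a1 == 1) && (a4 == 2)) || ((a1 == 2) && (a4 == 1))) || (((a2 == 1) && (a5 == 2)) || ((a2 == 2) && (a5 == 1))) || (((a3 == 1) && (a6 == 2)) || ((a3 == 2) && (a6 == 1))))))) &&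
  (a1 != 0 || ((((((a0 == 2) && (a4 == 1)) || ((a0 == 1) && (a4 == 2))) || (((a2 == 2) && (a7 == 2)) || ((a2 == 1) && (a7 == 1))) || (((a3 == 2) && (a8 == 2)) || ((a3 == 1) && (a8 == 1))))) && (((((a0 == 1) && (a4 == 1)) || ((a0 == 2) && (a4 == 2))) || (((a2 == 1) && (a7 == 2)) || ((a2 == 2) && (a7 == 1))) || (((a3 == 1) && (a8 == 2)) || ((a3 == 2) && (a8 == 1))))))) &&
  (a2 != 0 || ((((((a0 == 2) && (a5 == 1)) || ((a0 == 1) && (a5 == 2))) || (((a1 == 2) && (a7 == 1)) || ((a1 == 1) && (a7 == 2))) || (((a3 == 2) && (a9 == 2)) || ((a3 == 1) && (a9 == 1))))) && (((((a0 == 1) && (a5 == 1)) || ((a0 == 2) && (a5 == 2))) || (((a1 == 1) && (a7 == 1)) || ((a1 == 2) && (a7 == 2))) || (((a3 == 1) && (a9 == 2)) || ((a3 == 2) && (a9 == 1))))))) &&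
  (a3 != 0 || ((((((a0 == 2) && (a6 == 1)) || ((a0 == 1) && (a6 == 2))) || (((a1 == 2) && (a8 == 1)) || ((a1 == 1) && (a8 == 2))) || (((a2 == 2) && (a9 == 1)) || ((a2 == 1) && (a9 == 2))))) && (((((a0 == 1) && (a6 == 1)) || ((a0 == 2) && (a6 == 2))) || (((a1 == 1) && (a8 == 1)) || ((a1 == 2) && (a8 == 2))) || (((a2 == 1) && (a9 == 1)) || ((a2 == 2) && (a9 == 2))))))) &&
  (a4 != 0 || ((((((a0 == 1) && (a1 == 1)) || ((a0 == 2) && (a1 == 2))) || (((a5 == 2) && (a7 == 2)) || ((a5 == 1) && (a7 == 1))) || (((a6 == 2) && (a8 == 2)) || ((a6 == 1) && (a8 == 1))))) && (((((a0 == 2) && (a1 == 1)) || ((a0 == 1) && (a1 == 2))) || (((a5 == 1) && (a7 == 2)) || ((a5 == 2) && (a7 == 1))) || (((a6 == 1) && (a8 == 2)) || ((a6 == 2) && (a8 == 1))))))) &&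
  (a5 != 0 || ((((((a0 == 1) && (a2 == 1)) || ((a0 == 2) && (a2 == 2))) || (((a4 == 2) && (a7 == 1)) || ((a4 == 1) && (a7 == 2))) || (((a6 == 2) && (a9 == 2)) || ((a6 == 1) && (a9 == 1))))) && (((((a0 == 2) && (a2 == 1)) || ((a0 == 1) && (a2 == 2))) || (((a4 == 1) && (a7 == 1)) || ((a4 == 2) && (a7 == 2))) || (((a6 == 1) && (a9 == 2)) || ((a6 == 2) && (a9 == 1))))))) &&
  (a6 != 0 || ((((((a0 == 1) && (a3 == 1)) || ((a0 == 2) && (a3 == 2))) || (((a4 == 2) && (a8 == 1)) || ((a4 == 1) && (a8 == 2))) || (((a5 == 2) && (a9 == 1)) || ((a5 == 1) && (a9 == 2))))) && (((((a0 == 2) && (a3 == 1)) || ((a0 == 1) && (a3 == 2))) || (((a4 == 1) && (a8 == 1)) || ((a4 == 2) && (a8 == 2))) || (((a5 == 1) && (a9 == 1)) || ((a5 == 2) && (a9 == 2))))))) &&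
  (a7 != 0 || ((((((a1 == 1) && (a2 == 1)) || ((a1 == 2) && (a2 == 2))) || (((a4 == 1) && (a5 == 1)) || ((a4 == 2) && (a5 == 2))) || (((a8 == 2) && (a9 == 2)) || ((a8 == 1) && (a9 == 1))))) && (((((a1 == 2) && (a2 == 1)) || ((a1 == 1) && (a2 == 2))) || (((a4 == 2) && (a5 == 1)) || ((a4 == 1) && (a5 == 2))) || (((a8 == 1) && (a9 == 2)) || ((a8 == 2) && (a9 == 1))))))) &&
  (a8 != 0 || ((((((a1 == 1) && (a3 == 1)) || ((a1 == 2) && (a3 == 2))) || (((a4 == 1) && (a6 == 1)) || ((a4 == 2) && (a6 == 2))) || (((a7 == 2) && (a9 == 1)) || ((a7 == 1) && (a9 == 2))))) && (((((a1 == 2) && (a3 == 1)) || ((a1 == 1) && (a3 == 2))) || (((a4 == 2) && (a6 == 1)) || ((a4 == 1) && (a6 == 2))) || (((a7 == 1) && (a9 == 1)) || ((a7 == 2) && (a9 == 2))))))) &&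
  (a9 != 0 || ((((((a2 == 1) && (a3 == 1)) || ((a2 == 2) && (a3 == 2))) || (((a5 == 1) && (a6 == 1)) || ((a5 == 2) && (a6 == 2))) || (((a7 == 1) && (a8 == 1)) || ((a7 == 2) && (a8 == 2))))) && (((((a2 == 2) && (a3 == 1)) || ((a2 == 1) && (a3 == 2))) || (((a5 == 2) && (a6 == 1)) || ((a5 == 1) && (a6 == 2))) || (((a7 == 2) && (a8 == 1)) || ((a7 == 1) && (a8 == 2)))))))

def conclB : Bool :=
  (((a0 != 0) && (((a4 != 0) && (((a7 != 0) && (((a9 != 0) && (((a3 != 0) && (((a1 != 0) && ((a5 != 0))))))))))))) || ((((a0 != 0) && (((a4 != 0) && (((a8 != 0) && (((a9 != 0) && (((a2 != 0) && (((a1 != 0) && ((a6 != 0))))))))))))) || ((((a0 != 0) && (((a5 != 0) && (((a7 != 0) && (((a8 != 0) && (((a3 != 0) && (((a2 != 0) && ((a4 != 0))))))))))))) || ((((a0 != 0) && (((a5 != 0) && (((a9 != 0) && (((a8 != 0) && (((a1 != 0) && (((a2 != 0) && ((a6 != 0))))))))))))) || ((((a0 != 0) && (((a6 != 0) && (((a8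 != 0) && (((a7 != 0) && (((a2 != 0) && (((a3 != 0) && ((a4 != 0))))))))))))) || ((((a0 != 0) && (((a6 != 0) && (((a9 != 0) && (((a7 != 0) && (((a1 != 0) && (((a3 != 0) && ((a5 != 0))))))))))))) || ((((a1 != 0) && (((a7 != 0) && (((a5 != 0) && (((a6 != 0) && (((a3 != 0) && (((a2 != 0) && ((a4 != 0))))))))))))) || ((((a1 != 0) && (((a7 != 0) && (((a9 != 0) && (((a6 != 0) && (((a0 != 0) && (((a2 != 0) && ((a8 != 0))))))))))))) || ((((a1 != 0) && (((a8 != 0) && (((a6 != 0) && (((a5 != 0) && (((a2 != 0) && (((a3 != 0) && ((a4 != 0))))))))))))) || ((((a1 != 0) && (((a8 != 0) && (((a9 != 0) && (((a5 != 0) && (((a0 != 0) && (((a3 != 0) && ((a7 != 0))))))))))))) || ((((a2 != 0) && (((a9 != 0) && (((a6 != 0) && (((a4 != 0) && (((a1 != 0) && (((a3 != 0) && ((a5 != 0))))))))))))) || ((((a2 != 0) && (((a9 != 0) && (((a8 != 0) && (((a4 != 0) && (((a0 != 0) && (((a3 != 0) && ((a7 != 0))))))))))))) || ((((a0 != 0)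 && (((a1 != 0) && (((a7 != 0) && (((a9 != 0) && (((a6 != 0) && (((a4 != 0) && ((a2 != 0))))))))))))) || ((((a0 != 0) && (((a1 != 0) && (((a8 != 0) && (((a9 != 0) && (((a5 != 0) && (((a4 != 0) && ((a3 != 0))))))))))))) || ((((a0 != 0) && (((a2 != 0) && (((a7 != 0) && (((a8 != 0) && (((a6 != 0) && (((a5 != 0) && ((a1 != 0))))))))))))) || ((((a0 != 0) && (((a2 != 0) && (((a9 != 0) && (((a8 != 0) && (((a4 != 0) && (((a5 != 0) && ((a3 != 0))))))))))))) || ((((a0 != 0) && (((a3 != 0) && (((a8 != 0) && (((a7 != 0) && (((a5 != 0) && (((a6 != 0) && ((a1 != 0))))))))))))) || ((((a0 != 0) && (((a3 != 0) && (((a9 != 0) && (((a7 != 0) && (((a4 != 0) && (((a6 != 0) && ((a2 != 0))))))))))))) || ((((a4 != 0) && (((a7 != 0) && (((a9 != 0) && (((a3 != 0) && (((a0 != 0) && (((a5 != 0) && ((a8 != 0))))))))))))) || ((((a4 != 0) && (((a8 != 0) && (((a9 != 0) && (((a2 != 0) && (((a0 != 0) && (((a6 != 0) && ((a7 != 0)))))))))))))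 || ((((a5 != 0) && (((a9 != 0) && (((a8 != 0) && (((a1 != 0) && (((a0 != 0) && (((a6 != 0) && ((a7 != 0))))))))))))) || ((((a1 != 0) && (((a0 != 0) && (((a5 != 0) && (((a9 != 0) && (((a8 != 0) && (((a4 != 0) && ((a2 != 0))))))))))))) || ((((a1 != 0) && (((a0 != 0) && (((a6 != 0) && (((a9 != 0) && (((a7 != 0) && (((a4 != 0) && ((a3 != 0))))))))))))) || ((((a1 != 0) && (((a2 != 0) && (((a9 != 0) && (((a6 != 0) && (((a4 != 0) && (((a7 != 0) && ((a3 != 0))))))))))))) || ((((a1 != 0) && (((a3 != 0) && (((a9 != 0) && (((a5 != 0) && (((a4 != 0) && (((a8 != 0) && ((a2 != 0))))))))))))) || ((((a4 != 0) && (((a5 != 0) && (((a9 != 0) && (((a3 != 0) && (((a1 != 0) && (((a7 != 0) && ((a6 != 0))))))))))))) || ((((a4 != 0) && (((a6 != 0) && (((a9 != 0) && (((a2 != 0) && (((a1 != 0) && (((a8 != 0) && ((a5 != 0))))))))))))) || ((((a2 != 0) && (((a0 != 0) && (((a6 != 0) && (((a8 != 0) && (((a7 != 0) && (((a5 != 0)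 && ((a3 != 0))))))))))))) || ((((a2 != 0) && (((a1 != 0) && (((a8 != 0) && (((a6 != 0) && (((a5 != 0) && (((a7 != 0) && ((a3 != 0))))))))))))) || (((a5 != 0) && (((a4 != 0) && (((a8 != 0) && (((a3 != 0) && (((a2 != 0) && (((a7 != 0) && ((a6 != 0)))))))))))))))))))))))))))))))))))))))))))))))))))))))))))))))))))))))

def Q10 : Prop := hypB a0 a1 a2 a3 a4 a5 a6 a7 a8 a9 = true → conclB a0 a1 a2 a3 a4 a5 a6 a7 a8 a9 = true
instance : Decidable (Q10 a0 a1 a2 a3 a4 a5 a6 a7 a8 a9) := by unfold Q10; infer_instance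

def Q9 (a0 a1 a2 a3 a4 a5 a6 a7 a8 : Nat) : Prop := ∀ a9, a9 < 3 → Q10 a0 a1 a2 a3 a4 a5 a6 a7 a8 a9
instance (a0 a1 a2 a3 a4 a5 a6 a7 a8 : Nat) : Decidable (Q9 a0 a1 a2 a3 a4 a5 a6 a7 a8) := by unfold Q9; infer_instance

def Q8 (a0 a1 a2 a3 a4 a5 a6 a7 : Nat) : Prop := ∀ a8, a8 < 3 → Q9 a0 a1 a2 a3 a4 a5 a6 a7 a8
instance (a0 a1 a2 a3 a4 a5 a6 a7 : Nat) : Decidable (Q8 a0 a1 a2 a3 a4 a5 a6 a7) := by unfold Q8; infer_instance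

def Q7 (a0 a1 a2 a3 a4 a5 a6 : Nat) : Prop := ∀ a7, a7 < 3 → Q8 a0 a1 a2 a3 a4 a5 a6 a7
instance (a0 a1 a2 a3 a4 a5 a6 : Nat) : Decidable (Q7 a0 a1 a2 a3 a4 a5 a6) := by unfold Q7; infer_instance

def Q6 (a0 a1 a2 a3 a4 a5 : Nat) : Prop := ∀ a6, a6 < 3 → Q7 a0 a1 a2 a3 a4 a5 a6
instance (a0 a1 a2 a3 a4 a5 : Nat) : Decidable (Q6 a0 a1 a2 a3 a4 a5) := by unfold Q6; infer_instance

def Q5 (a0 a1 a2 a3 a4 : Nat) : Prop := ∀ a5, a5 < 3 → Q6 a0 a1 a2 a3 a4 a5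
instance (a0 a1 a2 a3 a4 : Nat) : Decidable (Q5 a0 a1 a2 a3 a4) := by unfold Q5; infer_instance

def Q4 (a0 a1 a2 a3 : Nat) : Prop := ∀ a4, a4 < 3 → Q5 a0 a1 a2 a3 a4
instance (a0 a1 a2 a3 : Nat) : Decidable (Q4 a0 a1 a2 a3) := by unfold Q4; infer_instance

def Q3 (a0 a1 a2 : Nat) : Prop := ∀ a3, a3 < 2 → Q4 a0 a1 a2 a3
instance (a0 a1 a2 : Nat) : Decidable (Q3 a0 a1 a2) := by unfold Q3; infer_instance

def Q2 (a0 a1 : Nat) : Prop := ∀ a2, a2 < 2 → Q3 a0 a1 a2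
instance (a0 a1 : Nat) : Decidable (Q2 a0 a1) := by unfold Q2; infer_instance

def Q1 (a0 : Nat) : Prop := ∀ a1, a1 < 2 → Q2 a0 a1
instance (a0 : Nat) : Decidable (Q1 a0) := by unfold Q1; infer_instance

def Q0  : Prop := ∀ a0, a0 < 2 → Q1  a0
instance  : Decidable (Q0 ) := by unfold Q0; infer_instance

set_option maxRecDepth 100000 in
theorem key : Q0 := by decide

end PushAux

section Bridge

variable {V : Type*} {A : V → V → Prop}

lemma push_adj (S : Set V) (A : V → V → Prop) (u v : V) :
    Adj (push S A) u v ↔ Adj A u v := by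
  unfold Adj push
  by_cases hu : u ∈ S <;> by_cases hv : v ∈ S <;> simp [hu, hv, Xor'] <;> tauto

lemma push_oriented (S : Set V) (A : V → V → Prop) (hO : IsOriented A) :
    IsOriented (push S A) := by
  obtain ⟨h1, h2⟩ := hO
  constructor
  · rintro v (⟨_, hA⟩ | ⟨_, hA⟩) <;> exact h1 v hA
  · intro u v huv hvu
    rcases huv with ⟨x1, a1⟩ | ⟨x1, a1⟩ <;> rcases hvu with ⟨x2, a2⟩ | ⟨x2, a2⟩
    · exact h2 _ _ a2 a1
    · exact x2 (Or.symm x1)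
    · exact x1 (Or.symm x2)
    · exact h2 _ _ a1 a2

lemma push_push (S T : Set V) (A : V → V → Prop) :
    push T (push S A) = push {v | Xor' (v ∈ S) (v ∈ T)} A := by
  funext u v; apply propext
  by_cases hu1 : u ∈ S <;> by_cases hv1 : v ∈ S <;> by_cases hu2 : u ∈ T <;> by_cases hv2 : v ∈ T <;>
    simp [push, Xor', hu1, hv1, hu2, hv2, Set.mem_setOf_eq] <;> tauto

lemma push_cliq (S : Set V) (A : V → V → Prop) (hP : IsPushClique A) :
    IsPushClique (push S A) := by
  intro T; rw [push_push]; exact hP _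

lemma push_rev {S : Set V} {u v : V} (h : Xor' (u ∈ S) (v ∈ S)) :
    push S A u v ↔ A v u := by
  constructor
  · rintro (⟨_, ha⟩ | ⟨hn, _⟩)
    · exact ha
    · exact absurd h hn
  · exact fun ha => Or.inl ⟨h, ha⟩

lemma push_fwd {S : Set V} {u v : V} (h : ¬ Xor' (u ∈ S) (v ∈ S)) :
    push S A u v ↔ A u v := by
  constructor
  · rintro (⟨hn, _⟩ | ⟨_, ha⟩)
    · exact absurd hn h
    · exact ha
  · exact fun ha => Or.inr ⟨h, ha⟩

lemma pc_witnesses (hO : IsOriented A) (hP : IsPushClique A) {x y : V}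
    (hna : ¬ Adj A x y) (hxy : x ≠ y) :
    (∃ w, AgreeOn A x y w) ∧ (∃ w, DisagreeOn A x y w) := by
  have hpush0 : ∀ u v : V, push ∅ A u v ↔ A u v := by
    intro u v; simp [push, Xor']
  constructor
  · rcases hP {x} x y hxy with hadj | ⟨w, hw⟩
    · exact absurd ((push_adj _ _ _ _).mp hadj) hna
    · by_cases hwx : w = x
      · subst hwx
        exfalso
        rcases hw with ⟨h1, _⟩ | ⟨_, h1⟩ <;> exact (push_oriented _ _ hO).1 _ h1
      · have hx : x ∈ ({x} : Set V) := rfl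
        have hwS : w ∉ ({x} : Set V) := hwx
        have hyS : y ∉ ({x} : Set V) := fun hh => hxy (Set.mem_singleton_iff.mp hh).symm
        have exw : Xor' (x ∈ ({x} : Set V)) (w ∈ ({x} : Set V)) := Or.inl ⟨hx, hwS⟩
        have ewx : Xor' (w ∈ ({x} : Set V)) (x ∈ ({x} : Set V)) := Or.inr ⟨hx, hwS⟩
        have nwy : ¬ Xor' (w ∈ ({x} : Set V)) (y ∈ ({x} : Set V)) := by
          rintro (⟨ha, hb⟩ | ⟨ha, hb⟩) <;> contradiction
        have nyw : ¬ Xor' (y ∈ ({x} : Set V)) (w ∈ ({x} : Set V)) := by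
          rintro (⟨ha, hb⟩ | ⟨ha, hb⟩) <;> contradiction
        rcases hw with ⟨h1, h2⟩ | ⟨h1, h2⟩
        · exact ⟨w, Or.inl ⟨(push_rev exw).mp h1, (push_fwd nwy).mp h2⟩⟩
        · exact ⟨w, Or.inr ⟨(push_rev ewx).mp h2, (push_fwd nyw).mp h1⟩⟩
  · rcases hP ∅ x y hxy with hadj | ⟨w, hw⟩
    · exact absurd ((push_adj _ _ _ _).mp hadj) hna
    · simp only [hpush0] at hw
      rcases hw with ⟨h1, h2⟩ | ⟨h1, h2⟩
      · exact ⟨w, Or.inl ⟨h1, h2⟩⟩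
      · exact ⟨w, Or.inr ⟨h2, h1⟩⟩

lemma ex5 {p : Fin 5 → Prop} (h : ∃ k, p k) : p 0 ∨ p 1 ∨ p 2 ∨ p 3 ∨ p 4 := by
  obtain ⟨k, hk⟩ := h
  fin_cases k
  · exact Or.inl hk
  · exact Or.inr (Or.inl hk)
  · exact Or.inr (Or.inr (Or.inl hk))
  · exact Or.inr (Or.inr (Or.inr (Or.inl hk)))
  · exact Or.inr (Or.inr (Or.inr (Or.inr hk)))

lemma agree_cases (hO : IsOriented A) {x y : V} (g : Fin 5 → V)
    (hg : ∀ w : V, ∃ k : Fin 5, g k = w) (h : ∃ w, AgreeOn A x y w) :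
    ∃ k : Fin 5, g k ≠ x ∧ g k ≠ y ∧ AgreeOn A x y (g k) := by
  obtain ⟨w, hw⟩ := h
  obtain ⟨k, rfl⟩ := hg w
  refine ⟨k, ?_, ?_, hw⟩ <;> rintro rfl <;> rcases hw with ⟨h1, h2⟩ | ⟨h1, h2⟩ <;>
    first | exact hO.1 _ h1 | exact hO.1 _ h2

lemma disagree_cases (hO : IsOriented A) {x y : V} (g : Fin 5 → V)
    (hg : ∀ w : V, ∃ k : Fin 5, g k = w) (h : ∃ w, DisagreeOn A x y w) :
    ∃ k : Fin 5, g k ≠ x ∧ g k ≠ y ∧ DisagreeOn A x y (g k) := by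
  obtain ⟨w, hw⟩ := h
  obtain ⟨k, rfl⟩ := hg w
  refine ⟨k, ?_, ?_, hw⟩ <;> rintro rfl <;> rcases hw with ⟨h1, h2⟩ | ⟨h1, h2⟩ <;>
    first | exact hO.1 _ h1 | exact hO.1 _ h2

open Classical in
noncomputable def enc (A : V → V → Prop) (x y : V) : Nat :=
  if A x y then 1 else if A y x then 2 else 0

lemma enc_lt3 (A : V → V → Prop) (x y : V) : enc A x y < 3 := by
  unfold enc; split_ifs <;> norm_num

lemma enc_lt2 {x y : V} (h : ¬ A y x) : enc A x y < 2 := by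
  unfold enc
  by_cases h1 : A x y
  · simp [h1]
  · simp [h1, h]

lemma enc_eq_one {x y : V} : enc A x y = 1 ↔ A x y := by
  unfold enc; split_ifs with h1 h2
  · simp [h1]
  · simp [h1]
  · simp [h1]

lemma enc_eq_two (hO : IsOriented A) (x y : V) : enc A x y = 2 ↔ A y x := by
  unfold enc; split_ifs with h1 h2
  · simp [hO.2 _ _ h1]
  · simp [h2]
  · simp [h2]

lemma enc_ne_zero (hO : IsOriented A) (x y : V) : ¬ enc A x y = 0 ↔ (A x y ∨ A y x) := by
  unfold enc; split_ifs with h1 h2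
  · simp [h1]
  · simp [h2]
  · simp [h1, h2]

lemma fin5_cover : ∀ i j k l m n : Fin 5, i ≠ j → i ≠ k → i ≠ l → i ≠ m →
    j ≠ k → j ≠ l → j ≠ m → k ≠ l → k ≠ m → l ≠ m →
    n = i ∨ n = j ∨ n = k ∨ n = l ∨ n = m := by decide

end Bridge

set_option maxHeartbeats 2000000 in
theorem stmt_15 {V : Type*} [Fintype V] (hV : Fintype.card V = 5)
    (G : SimpleGraph V) (h : IsUnderlyingPushClique G) :
    ∃ a b c d e : V, a ≠ b ∧ a ≠ c ∧ a ≠ d ∧ a ≠ e ∧ b ≠ c ∧ b ≠ d ∧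
      b ≠ e ∧ c ≠ d ∧ c ≠ e ∧ d ≠ e ∧
      ({a, b, c, d, e} : Set V) = Set.univ ∧
      G.Adj a b ∧ G.Adj b c ∧ G.Adj c d ∧ G.Adj d e ∧ G.Adj e a ∧
      G.Adj a c ∧ G.Adj b d := by
  classical
  obtain ⟨A0, ⟨hO0, hG0⟩, hP0⟩ := h
  have e : V ≃ Fin 5 := Fintype.equivFinOfCardEq hV
  have hmain : ∃ A : V → V → Prop, IsOriented A ∧ IsPushClique A ∧
      (∀ u v, Adj A u v ↔ G.Adj u v) ∧ ∀ i : Fin 5, ¬ A (e.symm i) (e.symm 0) := by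
    refine ⟨push {w | A0 w (e.symm 0)} A0, push_oriented _ _ hO0, push_cliq _ _ hP0,
      fun u v => (push_adj _ _ u v).trans (hG0 u v), ?_⟩
    rintro i (⟨hx, ha⟩ | ⟨hx, ha⟩)
    · rcases hx with ⟨h1, _⟩ | ⟨h1, _⟩
      · exact hO0.2 _ _ h1 ha
      · exact hO0.1 _ h1
    · exact hx (Or.inl ⟨ha, hO0.1 _⟩)
  obtain ⟨A, hO, hP, hGA, hnoback⟩ := hmain
  have hsurj : ∀ w : V, ∃ k : Fin 5, e.symm k = w := fun w => ⟨e w, e.symm_apply_apply w⟩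
  have hhyp : PushAux.hypB (enc A (e.symm 0) (e.symm 1)) (enc A (e.symm 0) (e.symm 2)) (enc A (e.symm 0) (e.symm 3)) (enc A (e.symm 0) (e.symm 4)) (enc A (e.symm 1) (e.symm 2)) (enc A (e.symm 1) (e.symm 3)) (enc A (e.symm 1) (e.symm 4)) (enc A (e.symm 2) (e.symm 3)) (enc A (e.symm 2) (e.symm 4)) (enc A (e.symm 3) (e.symm 4)) = true := by
    simp only [PushAux.hypB, Bool.and_eq_true, Bool.or_eq_true, bne_iff_ne, beq_iff_eq,
      ne_eq, enc_ne_zero hO, enc_eq_one, enc_eq_two hO]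
    repeat' apply And.intro
    · refine or_iff_not_imp_left.mpr fun hna => ?_
      obtain ⟨hag, hdg⟩ := pc_witnesses hO hP hna (e.symm.injective.ne (by decide))
      refine ⟨?_, ?_⟩
      · rcases ex5 (agree_cases hO _ hsurj hag) with
          ⟨h1, h2, hAg⟩ | ⟨h1, h2, hAg⟩ | ⟨h1, h2, hAg⟩ | ⟨h1, h2, hAg⟩ | ⟨h1, h2, hAg⟩ <;>
          first
          | exact absurd rfl h1
          | exact absurd rfl h2
          | exact Or.inl (Or.inl hAg)
          | exact Or.inl (Or.inr hAg)
          | exact Or.inr hAg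
      · rcases ex5 (disagree_cases hO _ hsurj hdg) with
          ⟨h1, h2, hDg⟩ | ⟨h1, h2, hDg⟩ | ⟨h1, h2, hDg⟩ | ⟨h1, h2, hDg⟩ | ⟨h1, h2, hDg⟩ <;>
          first
          | exact absurd rfl h1
          | exact absurd rfl h2
          | exact Or.inl (Or.inl hDg)
          | exact Or.inl (Or.inr hDg)
          | exact Or.inr hDg
    · refine or_iff_not_imp_left.mpr fun hna => ?_
      obtain ⟨hag, hdg⟩ := pc_witnesses hO hP hna (e.symm.injective.ne (by decide))
      refine ⟨?_, ?_⟩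
      · rcases ex5 (agree_cases hO _ hsurj hag) with
          ⟨h1, h2, hAg⟩ | ⟨h1, h2, hAg⟩ | ⟨h1, h2, hAg⟩ | ⟨h1, h2, hAg⟩ | ⟨h1, h2, hAg⟩ <;>
          first
          | exact absurd rfl h1
          | exact absurd rfl h2
          | exact Or.inl (Or.inl hAg)
          | exact Or.inl (Or.inr hAg)
          | exact Or.inr hAg
      · rcases ex5 (disagree_cases hO _ hsurj hdg) with
          ⟨h1, h2, hDg⟩ | ⟨h1, h2, hDg⟩ | ⟨h1, h2, hDg⟩ | ⟨h1, h2, hDg⟩ | ⟨h1, h2, hDg⟩ <;>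
          first
          | exact absurd rfl h1
          | exact absurd rfl h2
          | exact Or.inl (Or.inl hDg)
          | exact Or.inl (Or.inr hDg)
          | exact Or.inr hDg
    · refine or_iff_not_imp_left.mpr fun hna => ?_
      obtain ⟨hag, hdg⟩ := pc_witnesses hO hP hna (e.symm.injective.ne (by decide))
      refine ⟨?_, ?_⟩
      · rcases ex5 (agree_cases hO _ hsurj hag) with
          ⟨h1, h2, hAg⟩ | ⟨h1, h2, hAg⟩ | ⟨h1, h2, hAg⟩ | ⟨h1, h2, hAg⟩ | ⟨h1, h2, hAg⟩ <;>
          first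
          | exact absurd rfl h1
          | exact absurd rfl h2
          | exact Or.inl (Or.inl hAg)
          | exact Or.inl (Or.inr hAg)
          | exact Or.inr hAg
      · rcases ex5 (disagree_cases hO _ hsurj hdg) with
          ⟨h1, h2, hDg⟩ | ⟨h1, h2, hDg⟩ | ⟨h1, h2, hDg⟩ | ⟨h1, h2, hDg⟩ | ⟨h1, h2, hDg⟩ <;>
          first
          | exact absurd rfl h1
          | exact absurd rfl h2
          | exact Or.inl (Or.inl hDg)
          | exact Or.inl (Or.inr hDg)
          | exact Or.inr hDg
    · refine or_iff_not_imp_left.mpr fun hna => ?_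
      obtain ⟨hag, hdg⟩ := pc_witnesses hO hP hna (e.symm.injective.ne (by decide))
      refine ⟨?_, ?_⟩
      · rcases ex5 (agree_cases hO _ hsurj hag) with
          ⟨h1, h2, hAg⟩ | ⟨h1, h2, hAg⟩ | ⟨h1, h2, hAg⟩ | ⟨h1, h2, hAg⟩ | ⟨h1, h2, hAg⟩ <;>
          first
          | exact absurd rfl h1
          | exact absurd rfl h2
          | exact Or.inl (Or.inl hAg)
          | exact Or.inl (Or.inr hAg)
          | exact Or.inr hAg
      · rcases ex5 (disagree_cases hO _ hsurj hdg) with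
          ⟨h1, h2, hDg⟩ | ⟨h1, h2, hDg⟩ | ⟨h1, h2, hDg⟩ | ⟨h1, h2, hDg⟩ | ⟨h1, h2, hDg⟩ <;>
          first
          | exact absurd rfl h1
          | exact absurd rfl h2
          | exact Or.inl (Or.inl hDg)
          | exact Or.inl (Or.inr hDg)
          | exact Or.inr hDg
    · refine or_iff_not_imp_left.mpr fun hna => ?_
      obtain ⟨hag, hdg⟩ := pc_witnesses hO hP hna (e.symm.injective.ne (by decide))
      refine ⟨?_, ?_⟩
      · rcases ex5 (agree_cases hO _ hsurj hag) with
          ⟨h1, h2, hAg⟩ | ⟨h1, h2, hAg⟩ | ⟨h1, h2, hAg⟩ | ⟨h1, h2, hAg⟩ | ⟨h1, h2, hAg⟩ <;>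
          first
          | exact absurd rfl h1
          | exact absurd rfl h2
          | exact Or.inl (Or.inl hAg)
          | exact Or.inl (Or.inr hAg)
          | exact Or.inr hAg
      · rcases ex5 (disagree_cases hO _ hsurj hdg) with
          ⟨h1, h2, hDg⟩ | ⟨h1, h2, hDg⟩ | ⟨h1, h2, hDg⟩ | ⟨h1, h2, hDg⟩ | ⟨h1, h2, hDg⟩ <;>
          first
          | exact absurd rfl h1
          | exact absurd rfl h2
          | exact Or.inl (Or.inl hDg)
          | exact Or.inl (Or.inr hDg)
          | exact Or.inr hDg
    · refine or_iff_not_imp_left.mpr fun hna => ?_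
      obtain ⟨hag, hdg⟩ := pc_witnesses hO hP hna (e.symm.injective.ne (by decide))
      refine ⟨?_, ?_⟩
      · rcases ex5 (agree_cases hO _ hsurj hag) with
          ⟨h1, h2, hAg⟩ | ⟨h1, h2, hAg⟩ | ⟨h1, h2, hAg⟩ | ⟨h1, h2, hAg⟩ | ⟨h1, h2, hAg⟩ <;>
          first
          | exact absurd rfl h1
          | exact absurd rfl h2
          | exact Or.inl (Or.inl hAg)
          | exact Or.inl (Or.inr hAg)
          | exact Or.inr hAg
      · rcases ex5 (disagree_cases hO _ hsurj hdg) with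
          ⟨h1, h2, hDg⟩ | ⟨h1, h2, hDg⟩ | ⟨h1, h2, hDg⟩ | ⟨h1, h2, hDg⟩ | ⟨h1, h2, hDg⟩ <;>
          first
          | exact absurd rfl h1
          | exact absurd rfl h2
          | exact Or.inl (Or.inl hDg)
          | exact Or.inl (Or.inr hDg)
          | exact Or.inr hDg
    · refine or_iff_not_imp_left.mpr fun hna => ?_
      obtain ⟨hag, hdg⟩ := pc_witnesses hO hP hna (e.symm.injective.ne (by decide))
      refine ⟨?_, ?_⟩
      · rcases ex5 (agree_cases hO _ hsurj hag) with
          ⟨h1, h2, hAg⟩ | ⟨h1, h2, hAg⟩ | ⟨h1, h2, hAg⟩ | ⟨h1, h2, hAg⟩ | ⟨h1, h2, hAg⟩ <;>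
          first
          | exact absurd rfl h1
          | exact absurd rfl h2
          | exact Or.inl (Or.inl hAg)
          | exact Or.inl (Or.inr hAg)
          | exact Or.inr hAg
      · rcases ex5 (disagree_cases hO _ hsurj hdg) with
          ⟨h1, h2, hDg⟩ | ⟨h1, h2, hDg⟩ | ⟨h1, h2, hDg⟩ | ⟨h1, h2, hDg⟩ | ⟨h1, h2, hDg⟩ <;>
          first
          | exact absurd rfl h1
          | exact absurd rfl h2
          | exact Or.inl (Or.inl hDg)
          | exact Or.inl (Or.inr hDg)
          | exact Or.inr hDg
    · refine or_iff_not_imp_left.mpr fun hna => ?_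
      obtain ⟨hag, hdg⟩ := pc_witnesses hO hP hna (e.symm.injective.ne (by decide))
      refine ⟨?_, ?_⟩
      · rcases ex5 (agree_cases hO _ hsurj hag) with
          ⟨h1, h2, hAg⟩ | ⟨h1, h2, hAg⟩ | ⟨h1, h2, hAg⟩ | ⟨h1, h2, hAg⟩ | ⟨h1, h2, hAg⟩ <;>
          first
          | exact absurd rfl h1
          | exact absurd rfl h2
          | exact Or.inl (Or.inl hAg)
          | exact Or.inl (Or.inr hAg)
          | exact Or.inr hAg
      · rcases ex5 (disagree_cases hO _ hsurj hdg) with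
          ⟨h1, h2, hDg⟩ | ⟨h1, h2, hDg⟩ | ⟨h1, h2, hDg⟩ | ⟨h1, h2, hDg⟩ | ⟨h1, h2, hDg⟩ <;>
          first
          | exact absurd rfl h1
          | exact absurd rfl h2
          | exact Or.inl (Or.inl hDg)
          | exact Or.inl (Or.inr hDg)
          | exact Or.inr hDg
    · refine or_iff_not_imp_left.mpr fun hna => ?_
      obtain ⟨hag, hdg⟩ := pc_witnesses hO hP hna (e.symm.injective.ne (by decide))
      refine ⟨?_, ?_⟩
      · rcases ex5 (agree_cases hO _ hsurj hag) with
          ⟨h1, h2, hAg⟩ | ⟨h1, h2, hAg⟩ | ⟨h1, h2, hAg⟩ | ⟨h1, h2, hAg⟩ | ⟨h1, h2, hAg⟩ <;>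
          first
          | exact absurd rfl h1
          | exact absurd rfl h2
          | exact Or.inl (Or.inl hAg)
          | exact Or.inl (Or.inr hAg)
          | exact Or.inr hAg
      · rcases ex5 (disagree_cases hO _ hsurj hdg) with
          ⟨h1, h2, hDg⟩ | ⟨h1, h2, hDg⟩ | ⟨h1, h2, hDg⟩ | ⟨h1, h2, hDg⟩ | ⟨h1, h2, hDg⟩ <;>
          first
          | exact absurd rfl h1
          | exact absurd rfl h2
          | exact Or.inl (Or.inl hDg)
          | exact Or.inl (Or.inr hDg)
          | exact Or.inr hDg
    · refine or_iff_not_imp_left.mpr fun hna => ?_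
      obtain ⟨hag, hdg⟩ := pc_witnesses hO hP hna (e.symm.injective.ne (by decide))
      refine ⟨?_, ?_⟩
      · rcases ex5 (agree_cases hO _ hsurj hag) with
          ⟨h1, h2, hAg⟩ | ⟨h1, h2, hAg⟩ | ⟨h1, h2, hAg⟩ | ⟨h1, h2, hAg⟩ | ⟨h1, h2, hAg⟩ <;>
          first
          | exact absurd rfl h1
          | exact absurd rfl h2
          | exact Or.inl (Or.inl hAg)
          | exact Or.inl (Or.inr hAg)
          | exact Or.inr hAg
      · rcases ex5 (disagree_cases hO _ hsurj hdg) with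
          ⟨h1, h2, hDg⟩ | ⟨h1, h2, hDg⟩ | ⟨h1, h2, hDg⟩ | ⟨h1, h2, hDg⟩ | ⟨h1, h2, hDg⟩ <;>
          first
          | exact absurd rfl h1
          | exact absurd rfl h2
          | exact Or.inl (Or.inl hDg)
          | exact Or.inl (Or.inr hDg)
          | exact Or.inr hDg
  have hconcl := PushAux.key (enc A (e.symm 0) (e.symm 1)) (enc_lt2 (hnoback 1)) (enc A (e.symm 0) (e.symm 2)) (enc_lt2 (hnoback 2)) (enc A (e.symm 0) (e.symm 3)) (enc_lt2 (hnoback 3)) (enc A (e.symm 0) (e.symm 4)) (enc_lt2 (hnoback 4)) (enc A (e.symm 1) (e.symm 2)) (enc_lt3 A (e.symm 1) (e.symm 2)) (enc A (e.symm 1) (e.symm 3)) (enc_lt3 A (e.symm 1) (e.symm 3)) (enc A (e.symm 1) (e.symm 4)) (enc_lt3 A (e.symm 1) (e.symm 4)) (enc A (e.symm 2) (e.symm 3)) (enc_lt3 A (e.symm 2) (e.symm 3)) (enc A (e.symm 2) (e.symm 4)) (enc_lt3 A (e.symm 2) (e.symm 4)) (enc A (e.symm 3) (e.symm 4)) (enc_lt3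 A (e.symm 3) (e.symm 4)) hhyp
  simp only [PushAux.conclB, Bool.or_eq_true, Bool.and_eq_true, bne_iff_ne,
    ne_eq, enc_ne_zero hO] at hconcl
  have final : ∀ i j k l m : Fin 5, i ≠ j → i ≠ k → i ≠ l → i ≠ m → j ≠ k → j ≠ l → j ≠ m →
      k ≠ l → k ≠ m → l ≠ m →
      Adj A (e.symm i) (e.symm j) → Adj A (e.symm j) (e.symm k) → Adj A (e.symm k) (e.symm l) →
      Adj A (e.symm l) (e.symm m) → Adj A (e.symm m) (e.symm i) → Adj A (e.symm i) (e.symm k) →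
      Adj A (e.symm j) (e.symm l) →
      ∃ a b c d e : V, a ≠ b ∧ a ≠ c ∧ a ≠ d ∧ a ≠ e ∧ b ≠ c ∧ b ≠ d ∧
        b ≠ e ∧ c ≠ d ∧ c ≠ e ∧ d ≠ e ∧
        ({a, b, c, d, e} : Set V) = Set.univ ∧
        G.Adj a b ∧ G.Adj b c ∧ G.Adj c d ∧ G.Adj d e ∧ G.Adj e a ∧
        G.Adj a c ∧ G.Adj b d := by
    intro i j k l m h1 h2 h3 h4 h5 h6 h7 h8 h9 h10 e1 e2 e3 e4 e5 e6 e7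
    refine ⟨e.symm i, e.symm j, e.symm k, e.symm l, e.symm m,
      e.symm.injective.ne h1, e.symm.injective.ne h2, e.symm.injective.ne h3,
      e.symm.injective.ne h4, e.symm.injective.ne h5, e.symm.injective.ne h6,
      e.symm.injective.ne h7, e.symm.injective.ne h8, e.symm.injective.ne h9,
      e.symm.injective.ne h10, ?_,
      (hGA _ _).mp e1, (hGA _ _).mp e2, (hGA _ _).mp e3, (hGA _ _).mp e4,
      (hGA _ _).mp e5, (hGA _ _).mp e6, (hGA _ _).mp e7⟩
    apply Set.eq_univ_of_forall
    intro x
    obtain ⟨kk, hkk⟩ := hsurj x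
    rcases fin5_cover i j k l m kk h1 h2 h3 h4 h5 h6 h7 h8 h9 h10 with
      rfl | rfl | rfl | rfl | rfl <;> simp [← hkk]
  rcases hconcl with h|h|h|h|h|h|h|h|h|h|h|h|h|h|h|h|h|h|h|h|h|h|h|h|h|h|h|h|h|h
  · exact final 0 1 2 3 4 (by decide) (by decide) (by decide) (by decide) (by decide) (by decide) (by decide) (by decide) (by decide) (by decide) h.1 h.2.1 h.2.2.1 h.2.2.2.1 (Or.symm h.2.2.2.2.1) h.2.2.2.2.2.1 h.2.2.2.2.2.2
  · exact final 0 1 2 4 3 (by decide) (by decide) (by decide) (by decide) (by decide) (by decide) (by decide) (by decide) (by decide) (by decide) h.1 h.2.1 h.2.2.1 (Or.symm h.2.2.2.1) (Or.symm h.2.2.2.2.1) h.2.2.2.2.2.1 h.2.2.2.2.2.2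
  · exact final 0 1 3 2 4 (by decide) (by decide) (by decide) (by decide) (by decide) (by decide) (by decide) (by decide) (by decide) (by decide) h.1 h.2.1 (Or.symm h.2.2.1) h.2.2.2.1 (Or.symm h.2.2.2.2.1) h.2.2.2.2.2.1 h.2.2.2.2.2.2
  · exact final 0 1 3 4 2 (by decide) (by decide) (by decide) (by decide) (by decide) (by decide) (by decide) (by decide) (by decide) (by decide) h.1 h.2.1 h.2.2.1 (Or.symm h.2.2.2.1) (Or.symm h.2.2.2.2.1) h.2.2.2.2.2.1 h.2.2.2.2.2.2
  · exact final 0 1 4 2 3 (by decide) (by decide) (by decide) (by decide) (by decide) (by decide) (by decide) (by decide) (by decide) (by decide) h.1 h.2.1 (Or.symm h.2.2.1) h.2.2.2.1 (Or.symm h.2.2.2.2.1) h.2.2.2.2.2.1 h.2.2.2.2.2.2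
  · exact final 0 1 4 3 2 (by decide) (by decide) (by decide) (by decide) (by decide) (by decide) (by decide) (by decide) (by decide) (by decide) h.1 h.2.1 (Or.symm h.2.2.1) (Or.symm h.2.2.2.1) (Or.symm h.2.2.2.2.1) h.2.2.2.2.2.1 h.2.2.2.2.2.2
  · exact final 0 2 3 1 4 (by decide) (by decide) (by decide) (by decide) (by decide) (by decide) (by decide) (by decide) (by decide) (by decide) h.1 h.2.1 (Or.symm h.2.2.1) h.2.2.2.1 (Or.symm h.2.2.2.2.1) h.2.2.2.2.2.1 (Or.symm h.2.2.2.2.2.2)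
  · exact final 0 2 3 4 1 (by decide) (by decide) (by decide) (by decide) (by decide) (by decide) (by decide) (by decide) (by decide) (by decide) h.1 h.2.1 h.2.2.1 (Or.symm h.2.2.2.1) (Or.symm h.2.2.2.2.1) h.2.2.2.2.2.1 h.2.2.2.2.2.2
  · exact final 0 2 4 1 3 (by decide) (by decide) (by decide) (by decide) (by decide) (by decide) (by decide) (by decide) (by decide) (by decide) h.1 h.2.1 (Or.symm h.2.2.1) h.2.2.2.1 (Or.symm h.2.2.2.2.1) h.2.2.2.2.2.1 (Or.symm h.2.2.2.2.2.2)
  · exact final 0 2 4 3 1 (by decide) (by decide) (by decide) (by decide) (by decide) (by decide) (by decide) (by decide) (by decide) (by decide) h.1 h.2.1 (Or.symm h.2.2.1) (Or.symm h.2.2.2.1) (Or.symm h.2.2.2.2.1) h.2.2.2.2.2.1 h.2.2.2.2.2.2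
  · exact final 0 3 4 1 2 (by decide) (by decide) (by decide) (by decide) (by decide) (by decide) (by decide) (by decide) (by decide) (by decide) h.1 h.2.1 (Or.symm h.2.2.1) h.2.2.2.1 (Or.symm h.2.2.2.2.1) h.2.2.2.2.2.1 (Or.symm h.2.2.2.2.2.2)
  · exact final 0 3 4 2 1 (by decide) (by decide) (by decide) (by decide) (by decide) (by decide) (by decide) (by decide) (by decide) (by decide) h.1 h.2.1 (Or.symm h.2.2.1) (Or.symm h.2.2.2.1) (Or.symm h.2.2.2.2.1) h.2.2.2.2.2.1 (Or.symm h.2.2.2.2.2.2)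
  · exact final 1 0 2 3 4 (by decide) (by decide) (by decide) (by decide) (by decide) (by decide) (by decide) (by decide) (by decide) (by decide) (Or.symm h.1) h.2.1 h.2.2.1 h.2.2.2.1 (Or.symm h.2.2.2.2.1) h.2.2.2.2.2.1 h.2.2.2.2.2.2
  · exact final 1 0 2 4 3 (by decide) (by decide) (by decide) (by decide) (by decide) (by decide) (by decide) (by decide) (by decide) (by decide) (Or.symm h.1) h.2.1 h.2.2.1 (Or.symm h.2.2.2.1) (Or.symm h.2.2.2.2.1) h.2.2.2.2.2.1 h.2.2.2.2.2.2
  · exact final 1 0 3 2 4 (by decide) (by decide) (by decide) (by decide) (by decide) (by decide) (by decide) (by decide) (by decide) (by decide) (Or.symm h.1) h.2.1 (Or.symm h.2.2.1) h.2.2.2.1 (Or.symm h.2.2.2.2.1) h.2.2.2.2.2.1 h.2.2.2.2.2.2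
  · exact final 1 0 3 4 2 (by decide) (by decide) (by decide) (by decide) (by decide) (by decide) (by decide) (by decide) (by decide) (by decide) (Or.symm h.1) h.2.1 h.2.2.1 (Or.symm h.2.2.2.1) (Or.symm h.2.2.2.2.1) h.2.2.2.2.2.1 h.2.2.2.2.2.2
  · exact final 1 0 4 2 3 (by decide) (by decide) (by decide) (by decide) (by decide) (by decide) (by decide) (by decide) (by decide) (by decide) (Or.symm h.1) h.2.1 (Or.symm h.2.2.1) h.2.2.2.1 (Or.symm h.2.2.2.2.1) h.2.2.2.2.2.1 h.2.2.2.2.2.2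
  · exact final 1 0 4 3 2 (by decide) (by decide) (by decide) (by decide) (by decide) (by decide) (by decide) (by decide) (by decide) (by decide) (Or.symm h.1) h.2.1 (Or.symm h.2.2.1) (Or.symm h.2.2.2.1) (Or.symm h.2.2.2.2.1) h.2.2.2.2.2.1 h.2.2.2.2.2.2
  · exact final 1 2 3 4 0 (by decide) (by decide) (by decide) (by decide) (by decide) (by decide) (by decide) (by decide) (by decide) (by decide) h.1 h.2.1 h.2.2.1 (Or.symm h.2.2.2.1) h.2.2.2.2.1 h.2.2.2.2.2.1 h.2.2.2.2.2.2
  · exact final 1 2 4 3 0 (by decide) (by decide) (by decide) (by decide) (by decide) (by decide) (by decide) (by decide) (by decide) (by decide) h.1 h.2.1 (Or.symm h.2.2.1) (Or.symm h.2.2.2.1) h.2.2.2.2.1 h.2.2.2.2.2.1 h.2.2.2.2.2.2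
  · exact final 1 3 4 2 0 (by decide) (by decide) (by decide) (by decide) (by decide) (by decide) (by decide) (by decide) (by decide) (by decide) h.1 h.2.1 (Or.symm h.2.2.1) (Or.symm h.2.2.2.1) h.2.2.2.2.1 h.2.2.2.2.2.1 (Or.symm h.2.2.2.2.2.2)
  · exact final 2 0 1 3 4 (by decide) (by decide) (by decide) (by decide) (by decide) (by decide) (by decide) (by decide) (by decide) (by decide) (Or.symm h.1) h.2.1 h.2.2.1 h.2.2.2.1 (Or.symm h.2.2.2.2.1) (Or.symm h.2.2.2.2.2.1) h.2.2.2.2.2.2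
  · exact final 2 0 1 4 3 (by decide) (by decide) (by decide) (by decide) (by decide) (by decide) (by decide) (by decide) (by decide) (by decide) (Or.symm h.1) h.2.1 h.2.2.1 (Or.symm h.2.2.2.1) (Or.symm h.2.2.2.2.1) (Or.symm h.2.2.2.2.2.1) h.2.2.2.2.2.2
  · exact final 2 0 3 4 1 (by decide) (by decide) (by decide) (by decide) (by decide) (by decide) (by decide) (by decide) (by decide) (by decide) (Or.symm h.1) h.2.1 h.2.2.1 (Or.symm h.2.2.2.1) h.2.2.2.2.1 h.2.2.2.2.2.1 h.2.2.2.2.2.2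
  · exact final 2 0 4 3 1 (by decide) (by decide) (by decide) (by decide) (by decide) (by decide) (by decide) (by decide) (by decide) (by decide) (Or.symm h.1) h.2.1 (Or.symm h.2.2.1) (Or.symm h.2.2.2.1) h.2.2.2.2.1 h.2.2.2.2.2.1 h.2.2.2.2.2.2
  · exact final 2 1 3 4 0 (by decide) (by decide) (by decide) (by decide) (by decide) (by decide) (by decide) (by decide) (by decide) (by decide) (Or.symm h.1) h.2.1 h.2.2.1 (Or.symm h.2.2.2.1) h.2.2.2.2.1 h.2.2.2.2.2.1 h.2.2.2.2.2.2
  · exact final 2 1 4 3 0 (by decide) (by decide) (by decide) (by decide) (by decide) (by decide) (by decide) (by decide) (by decide) (by decide) (Or.symm h.1) h.2.1 (Or.symm h.2.2.1) (Or.symm h.2.2.2.1) h.2.2.2.2.1 h.2.2.2.2.2.1 h.2.2.2.2.2.2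
  · exact final 3 0 1 4 2 (by decide) (by decide) (by decide) (by decide) (by decide) (by decide) (by decide) (by decide) (by decide) (by decide) (Or.symm h.1) h.2.1 h.2.2.1 (Or.symm h.2.2.2.1) h.2.2.2.2.1 (Or.symm h.2.2.2.2.2.1) h.2.2.2.2.2.2
  · exact final 3 0 2 4 1 (by decide) (by decide) (by decide) (by decide) (by decide) (by decide) (by decide) (by decide) (by decide) (by decide) (Or.symm h.1) h.2.1 h.2.2.1 (Or.symm h.2.2.2.1) h.2.2.2.2.1 (Or.symm h.2.2.2.2.2.1) h.2.2.2.2.2.2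
  · exact final 3 1 2 4 0 (by decide) (by decide) (by decide) (by decide) (by decide) (by decide) (by decide) (by decide) (by decide) (by decide) (Or.symm h.1) h.2.1 h.2.2.1 (Or.symm h.2.2.2.1) h.2.2.2.2.1 (Or.symm h.2.2.2.2.2.1) h.2.2.2.2.2.2
end

section
/- Let A be an oriented graph on a type V that is a push clique, and let v be a vertex that is non-adjacent to some vertex u ≠ v. Then v has at least two neighbors: there exist distinct vertices x ≠ y both adjacent to v in A. -/
theorem stmt_18 {V : Type*} (A : V → V → Prop) (hA : IsOriented A)
    (h : IsPushClique A) (u v : V) (huv : u ≠ v) (hnadj : ¬ Adj A u v) :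
    ∃ x y : V, x ≠ y ∧ Adj A v x ∧ Adj A v y := by
  obtain ⟨hirr, hasym⟩ := hA
  have hp : ∀ (S : Set V) (a b : V), push S A a b → A a b ∨ A b a := by
    rintro S a b (⟨_, h'⟩ | ⟨_, h'⟩)
    · exact Or.inr h'
    · exact Or.inl h'
  have pushT : ∀ (S : Set V) (a b : V), Xor' (a ∈ S) (b ∈ S) → (push S A a b ↔ A b a) := by
    intro S a b hx
    unfold push
    tauto
  have pushF : ∀ (S : Set V) (a b : V), ¬ Xor' (a ∈ S) (b ∈ S) → (push S A a b ↔ A a b) := by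
    intro S a b hx
    unfold push
    tauto
  -- Step 1: from the empty push, get a 2-path vertex w
  have e0 : ∀ a b : V, push (∅ : Set V) A a b ↔ A a b := by
    intro a b
    apply pushF
    simp [Xor']
  rcases h ∅ u v huv with hadj | ⟨w, hw⟩
  · exact absurd (hadj.imp (e0 u v).1 (e0 v u).1) hnadj
  rw [e0, e0, e0, e0] at hw
  have hwu : w ≠ u := by
    rintro rfl
    rcases hw with ⟨a, b⟩ | ⟨a, b⟩
    · exact hirr _ a
    · exact hirr _ b
  have hwv : w ≠ v := by
    rintro rfl
    rcases hw with ⟨a, b⟩ | ⟨a, b⟩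
    · exact hirr _ b
    · exact hirr _ a
  have hadvw : Adj A v w := by
    rcases hw with ⟨a, b⟩ | ⟨a, b⟩
    · exact Or.inr b
    · exact Or.inl a
  -- Step 2: push by S = {u, w}
  set S : Set V := {u, w} with hS
  have huS : u ∈ S := Or.inl rfl
  have hwS : w ∈ S := Or.inr rfl
  have hvS : v ∉ S := by
    rintro (rfl | rfl)
    · exact huv rfl
    · exact hwv rfl
  rcases h S u v huv with hadj | ⟨x, hx⟩
  · rcases hadj with h' | h'
    · exact absurd ((hp S u v h').imp id id) hnadj
    · exact absurd ((hp S v u h').symm.imp id id) hnadj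
  by_cases hxu : x = u
  · subst hxu
    rcases hx with ⟨h1, _⟩ | ⟨_, h1⟩ <;>
      rcases hp S _ _ h1 with h' | h'
    · exact absurd h' (hasym _ _ h').elim
    · exact absurd h' (hasym _ _ h').elim
    · exact absurd ((pushF S x x (by simp [Xor'])).1 h1) (hirr x)
    · exact absurd ((pushF S x x (by simp [Xor'])).1 h1) (hirr x)
  by_cases hxw : x = w
  · subst hxw
    exfalso
    have hXuw : ¬ Xor' (u ∈ S) (x ∈ S) := by simp [Xor', huS, hwS]
    have hXxv : Xor' (x ∈ S) (v ∈ S) := by simp [Xor', hwS, hvS]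
    have hXvx : Xor' (v ∈ S) (x ∈ S) := by simp [Xor', hwS, hvS]
    rcases hx with ⟨h1, h2⟩ | ⟨h1, h2⟩
    · rw [pushF S u x hXuw] at h1
      rw [pushT S x v hXxv] at h2
      rcases hw with ⟨a, b⟩ | ⟨a, b⟩
      · exact hasym _ _ b h2
      · exact hasym _ _ b h1
    · rw [pushT S v x hXvx] at h1
      rw [pushF S x u (by simp [Xor', hwS, huS])] at h2
      rcases hw with ⟨a, b⟩ | ⟨a, b⟩
      · exact hasym _ _ a h2
      · exact hasym _ _ a h1
  -- x ∉ S
  have hxS : x ∉ S := by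
    rintro (rfl | rfl)
    · exact hxu rfl
    · exact hxw rfl
  have hadvx : Adj A v x := by
    rcases hx with ⟨_, h2⟩ | ⟨h1, _⟩
    · exact Or.inr ((pushF S x v (by simp [Xor', hxS, hvS])).1 h2)
    · exact Or.inl ((pushF S v x (by simp [Xor', hxS, hvS])).1 h1)
  exact ⟨w, x, fun e => hxw e.symm, hadvw, hadvx⟩
end

section
/- Let A be the special 4-cycle: the oriented graph on Fin 4 whose arcs are exactly 0→1, 1→2, 2→3 and 0→3. Then for every set S ⊆ Fin 4, the oriented graph push S A is isomorphic to A: there exists a bijection σ of Fin 4 such that (push S A) u v holds if and only if A (σ u) (σ v) holds. -/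
def A0 : Fin 4 → Fin 4 → Bool := fun u v =>
  ((u, v) = ((0 : Fin 4), (1 : Fin 4)) ∨ (u, v) = (1, 2) ∨ (u, v) = (2, 3) ∨ (u, v) = (0, 3))

lemma aux19 : ∀ f : Fin 4 → Bool, ∃ σ : Equiv.Perm (Fin 4), ∀ u v : Fin 4,
    (if xor (f u) (f v) then A0 v u else A0 u v) = A0 (σ u) (σ v) := by decide

theorem stmt_19 (A : Fin 4 → Fin 4 → Prop)
    (hA : ∀ u v : Fin 4, A u v ↔
      ((u, v) = (0, 1) ∨ (u, v) = (1, 2) ∨ (u, v) = (2, 3) ∨ (u, v) = (0, 3))) :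
    ∀ S : Set (Fin 4), ∃ σ : Equiv.Perm (Fin 4),
      ∀ u v : Fin 4, push S A u v ↔ A (σ u) (σ v) := by
  intro S
  classical
  obtain ⟨σ, hσ⟩ := aux19 (fun u => decide (u ∈ S))
  refine ⟨σ, fun u v => ?_⟩
  have hA0 : ∀ u v : Fin 4, A u v ↔ A0 u v = true := by
    intro u v; rw [hA]; simp [A0]
  have hx : Xor' (u ∈ S) (v ∈ S) ↔ xor (decide (u ∈ S)) (decide (v ∈ S)) = true := by
    rcases Classical.em (u ∈ S) with h1 | h1 <;> rcases Classical.em (v ∈ S) with h2 | h2 <;>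
      simp [Xor', h1, h2]
  have key := hσ u v
  unfold push
  simp only [hA0]
  rw [← key, hx]
  by_cases h : xor (decide (u ∈ S)) (decide (v ∈ S)) = true
  · simp [h]
  · simp [h]
end
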